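/- Let G be a world graph, 𝒟 a DFA over the alphabet E, ℳ = 𝒟 × G the product partial DFA, and A : Y → Y a sensor alteration. Then the language of the observation-relaxation NFA M of ℳ under A equals the image of L(ℳ) under the altered observation map, i.e., L(M) = { O_A(r) : r ∈ L(ℳ) } = { O_A(r) : r ∈ L(𝒟) ∩ Walks(G) }. -/

import Mathlib

/-- A world graph: regions `V`, edges `E`, events `Y`, with source/target maps,
an initial vertex, and an observation function assigning to each edge a nonempty
finite set of events. -/
structure WorldGraph (V E Y : Type*) where
  src : E → V
  tgt : E → V
  v0 : V
  obs : E → Finset Y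
  obs_nonempty : ∀ e, obs e ≠ ∅

namespace WorldGraph

variable {V E Y : Type*}

/-- A walk of the world graph: a finite word `e₁ ⋯ eₙ` over `E` such that
`src e₁ = v₀` and `tgt eᵢ = src eᵢ₊₁` for all `1 ≤ i < n` (the empty word is a walk). -/
def IsWalk (G : WorldGraph V E Y) (w : List E) : Prop :=
  (∀ h : w ≠ [], G.src (w.head h) = G.v0) ∧
    ∀ (i : ℕ) (h : i + 1 < w.length),
      G.tgt (w.get ⟨i, Nat.lt_of_succ_lt h⟩) = G.src (w.get ⟨i + 1, h⟩)

/-- The observation sequence of a word of edges: each edge's observation,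
viewed as a multiset of events. -/
def obsSeq (G : WorldGraph V E Y) (w : List E) : List (Multiset Y) :=
  w.map fun e => (G.obs e).val

/-- The observation sequence of a word of edges under a sensor alteration `A : Y → Y`:
each edge `e` produces the multiset obtained by applying `A` to every element of
`obs e` (with multiplicity). -/
def obsSeqAlt (G : WorldGraph V E Y) (A : Y → Y) (w : List E) : List (Multiset Y) :=
  w.map fun e => Multiset.map A (G.obs e).val

end WorldGraph

open Classical in
/-- The product of a DFA `A` over alphabet `E` with a world graph `G`:
a partial DFA, modeled as a total DFA on `Option (Q × V)` where `none` is a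
rejecting sink standing for "undefined". States are pairs `(q, v)`, the initial
state is `(q₀, v₀)`, transitions follow an edge `e` only when `src e` matches the
current vertex, and accepting states are `F × V`. -/
noncomputable def prodDFA {V E Y Q : Type*} (A : DFA E Q) (G : WorldGraph V E Y) :
    DFA E (Option (Q × V)) where
  step := fun s e =>
    match s with
    | none => none
    | some (q, v) => if G.src e = v then some (A.step q e, G.tgt e) else none
  start := some (A.start, G.v0)
  accept := {s | ∃ q v, s = some (q, v) ∧ q ∈ A.accept}

/-- A sensor alteration `A : Y → Y` is deceptive for the itinerary DFA `I` and the
deviation DFA `D` on the world graph `G` if every walk in `L(D) ∩ Walks(G)` produces,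
under `A`, the same observation sequence as some walk in `L(I) ∩ Walks(G)`. -/
def Deceptive {V E Y QI QD : Type*} (G : WorldGraph V E Y)
    (I : DFA E QI) (D : DFA E QD) (A : Y → Y) : Prop :=
  ∀ r : List E, r ∈ D.accepts → G.IsWalk r →
    ∃ r' : List E, r' ∈ I.accepts ∧ G.IsWalk r' ∧ G.obsSeqAlt A r = G.obsSeq r'

/-- The observation-relaxation of the product partial DFA `A × G`: an NFA over
multisets of events with the same states, initial state and accepting states,
whose transitions on letter `x` follow any edge `e` with `O(e) = x` on which the
product transition is defined. -/
def relaxNFA {V E Y Q : Type*} (A : DFA E Q) (G : WorldGraph V E Y) :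
    NFA (Multiset Y) (Q × V) where
  step := fun p x =>
    {p' | ∃ e : E, G.src e = p.2 ∧ (G.obs e).val = x ∧ p' = (A.step p.1 e, G.tgt e)}
  start := {(A.start, G.v0)}
  accept := {p | p.1 ∈ A.accept}

/-- The observation-relaxation of the product partial DFA `D × G` under a sensor
alteration `A`: transitions on letter `x` follow any edge `e` with `O_A(e) = x`
on which the product transition is defined. -/
def relaxNFAAlt {V E Y Q : Type*} (D : DFA E Q) (G : WorldGraph V E Y) (A : Y → Y) :
    NFA (Multiset Y) (Q × V) where
  step := fun p x =>
    {p' | ∃ e : E, G.src e = p.2 ∧ Multiset.map A (G.obs e).val = x ∧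
      p' = (D.step p.1 e, G.tgt e)}
  start := {(D.start, G.v0)}
  accept := {p | p.1 ∈ D.accept}

section Aux

variable {V E Y Q : Type*}

/-- Edges chain starting from vertex `v`. -/
def ChainP (G : WorldGraph V E Y) : V → List E → Prop
  | _, [] => True
  | v, e :: r => G.src e = v ∧ ChainP G (G.tgt e) r

/-- End vertex after following edges from `v`. -/
def endV (G : WorldGraph V E Y) (v : V) (r : List E) : V :=
  r.foldl (fun _ e => G.tgt e) v

/-- Generalized walk-from-a-vertex predicate. -/
def WalkFrom (G : WorldGraph V E Y) (v : V) (w : List E) : Prop :=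
  (∀ h : w ≠ [], G.src (w.head h) = v) ∧
    ∀ (i : ℕ) (h : i + 1 < w.length),
      G.tgt (w.get ⟨i, Nat.lt_of_succ_lt h⟩) = G.src (w.get ⟨i + 1, h⟩)

lemma walkFrom_iff_chainP (G : WorldGraph V E Y) :
    ∀ (w : List E) (v : V), WalkFrom G v w ↔ ChainP G v w := by
  intro w
  induction w with
  | nil =>
    intro v
    constructor
    · intro _; trivial
    · intro _
      exact ⟨fun h => absurd rfl h, fun i h => absurd h (by simp)⟩
  | cons e r ih =>
    intro v
    constructor
    · rintro ⟨h1, h2⟩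
      refine ⟨h1 (by simp), (ih (G.tgt e)).1 ⟨?_, ?_⟩⟩
      · intro hr
        have h0 : 0 + 1 < (e :: r).length := by
          simp [List.length_cons]
          exact Nat.pos_of_ne_zero (fun h => hr (List.eq_nil_of_length_eq_zero h))
        have := h2 0 h0
        simpa [List.head_eq_getElem] using this.symm
      · intro i hi
        have hi' : (i + 1) + 1 < (e :: r).length := by simpa using Nat.succ_lt_succ hi
        have := h2 (i + 1) hi'
        simpa using this
    · rintro ⟨hs, hc⟩
      have hr := (ih (G.tgt e)).2 hc
      obtain ⟨hr1, hr2⟩ := hr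
      refine ⟨fun _ => by simpa using hs, ?_⟩
      intro i hi
      match i with
      | 0 =>
        have hrne : r ≠ [] := by
          intro h; subst h; simp at hi
        have := hr1 hrne
        simpa [List.head_eq_getElem] using this.symm
      | Nat.succ j =>
        have hj : j + 1 < r.length := by simpa using hi
        have := hr2 j hj
        simpa using this

lemma isWalk_iff_chainP (G : WorldGraph V E Y) (w : List E) :
    G.IsWalk w ↔ ChainP G G.v0 w :=
  walkFrom_iff_chainP G w G.v0

lemma prod_evalFrom_none (D : DFA E Q) (G : WorldGraph V E Y) (r : List E) :
    (prodDFA D G).evalFrom none r = none := by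
  induction r with
  | nil => rfl
  | cons e r ih => exact ih

lemma prod_evalFrom_some (D : DFA E Q) (G : WorldGraph V E Y) :
    ∀ (r : List E) (q : Q) (v : V), ChainP G v r →
      (prodDFA D G).evalFrom (some (q, v)) r
        = some (D.evalFrom q r, endV G v r) := by
  intro r
  induction r with
  | nil => intro q v _; rfl
  | cons e r ih =>
    rintro q v ⟨h1, h2⟩
    have hstep : (prodDFA D G).step (some (q, v)) e = some (D.step q e, G.tgt e) := by
      simp [prodDFA, h1]
    have : (prodDFA D G).evalFrom (some (q, v)) (e :: r)
        = (prodDFA D G).evalFrom ((prodDFA D G).step (some (q, v)) e) r := rfl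
    rw [this, hstep]
    exact ih (D.step q e) (G.tgt e) h2

lemma prod_chain_of_evalFrom (D : DFA E Q) (G : WorldGraph V E Y) :
    ∀ (r : List E) (q : Q) (v : V) (p : Q × V),
      (prodDFA D G).evalFrom (some (q, v)) r = some p → ChainP G v r := by
  intro r
  induction r with
  | nil => intro _ _ _ _; trivial
  | cons e r ih =>
    intro q v p h
    by_cases hs : G.src e = v
    · refine ⟨hs, ?_⟩
      have hstep : (prodDFA D G).step (some (q, v)) e = some (D.step q e, G.tgt e) := by
        simp [prodDFA, hs]
      have h' : (prodDFA D G).evalFrom (some (D.step q e, G.tgt e)) r = some p := by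
        rw [← hstep]; exact h
      exact ih (D.step q e) (G.tgt e) p h'
    · exfalso
      have hstep : (prodDFA D G).step (some (q, v)) e = none := by
        simp [prodDFA, hs]
      have h' : (prodDFA D G).evalFrom ((prodDFA D G).step (some (q, v)) e) r = some p := h
      rw [hstep, prod_evalFrom_none] at h'
      cases h'

lemma prod_accepts_iff (D : DFA E Q) (G : WorldGraph V E Y) (r : List E) :
    r ∈ (prodDFA D G).accepts ↔ r ∈ D.accepts ∧ ChainP G G.v0 r := by
  constructor
  · rintro h
    obtain ⟨q, v, heq, hq⟩ := h
    have hc : ChainP G G.v0 r :=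
      prod_chain_of_evalFrom D G r D.start G.v0 (q, v) heq
    have hthis := prod_evalFrom_some D G r D.start G.v0 hc
    have heq' : (prodDFA D G).evalFrom (some (D.start, G.v0)) r = some (q, v) := heq
    rw [heq'] at hthis
    have hqq : q = D.evalFrom D.start r := congrArg Prod.fst (Option.some.inj hthis)
    refine ⟨?_, hc⟩
    show D.evalFrom D.start r ∈ D.accept
    exact hqq ▸ hq
  · rintro ⟨ha, hc⟩
    refine ⟨D.evalFrom D.start r, endV G G.v0 r, ?_, ha⟩
    exact prod_evalFrom_some D G r D.start G.v0 hc

lemma relaxAlt_evalFrom (D : DFA E Q) (G : WorldGraph V E Y) (A : Y → Y) :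
    ∀ (t : List (Multiset Y)) (S : Set (Q × V)) (p' : Q × V),
      p' ∈ (relaxNFAAlt D G A).evalFrom S t ↔
        ∃ p ∈ S, ∃ r : List E, ChainP G p.2 r ∧ G.obsSeqAlt A r = t ∧
          p' = (D.evalFrom p.1 r, endV G p.2 r) := by
  intro t
  induction t with
  | nil =>
    intro S p'
    constructor
    · intro h
      exact ⟨p', h, [], trivial, rfl, rfl⟩
    · rintro ⟨p, hp, r, hc, hobs, hp'⟩
      have : r = [] := by
        cases r with
        | nil => rfl
        | cons e r => exact absurd hobs (by simp [WorldGraph.obsSeqAlt])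
      subst this
      simpa [hp', endV] using hp
  | cons x t ih =>
    intro S p'
    have hev : (relaxNFAAlt D G A).evalFrom S (x :: t)
        = (relaxNFAAlt D G A).evalFrom ((relaxNFAAlt D G A).stepSet S x) t := rfl
    rw [hev, ih]
    constructor
    · rintro ⟨p'', hp'', r, hc, hobs, hp'⟩
      rw [NFA.mem_stepSet] at hp''
      obtain ⟨p, hp, hstep⟩ := hp''
      obtain ⟨e, hse, hoe, heq⟩ := hstep
      refine ⟨p, hp, e :: r, ⟨hse, ?_⟩, ?_, ?_⟩
      · rw [heq] at hc; exact hc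
      · simp [WorldGraph.obsSeqAlt] at hobs ⊢
        exact ⟨hoe, hobs⟩
      · rw [heq] at hp'
        exact hp'
    · rintro ⟨p, hp, r, hc, hobs, hp'⟩
      cases r with
      | nil => exact absurd hobs (by simp [WorldGraph.obsSeqAlt])
      | cons e r =>
        obtain ⟨hse, hc'⟩ := hc
        simp [WorldGraph.obsSeqAlt] at hobs
        obtain ⟨hoe, hobs'⟩ := hobs
        refine ⟨(D.step p.1 e, G.tgt e), ?_, r, hc', ?_, hp'⟩
        · rw [NFA.mem_stepSet]
          exact ⟨p, hp, e, hse, hoe, rfl⟩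
        · simpa [WorldGraph.obsSeqAlt] using hobs'

lemma relaxAlt_accepts_iff (D : DFA E Q) (G : WorldGraph V E Y) (A : Y → Y)
    (t : List (Multiset Y)) :
    t ∈ (relaxNFAAlt D G A).accepts ↔
      ∃ r : List E, r ∈ D.accepts ∧ ChainP G G.v0 r ∧ t = G.obsSeqAlt A r := by
  constructor
  · rintro ⟨p', hacc, hev⟩
    rw [show (relaxNFAAlt D G A).eval t = (relaxNFAAlt D G A).evalFrom {(D.start, G.v0)} t from rfl,
      relaxAlt_evalFrom] at hev
    obtain ⟨p, hp, r, hc, hobs, hp'⟩ := hev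
    simp only [Set.mem_singleton_iff] at hp
    subst hp
    refine ⟨r, ?_, hc, hobs.symm⟩
    have hthis : p'.1 = D.evalFrom D.start r := by rw [hp']
    show D.evalFrom D.start r ∈ D.accept
    exact hthis ▸ hacc
  · rintro ⟨r, ha, hc, hobs⟩
    refine ⟨(D.evalFrom D.start r, endV G G.v0 r), ha, ?_⟩
    rw [show (relaxNFAAlt D G A).eval t = (relaxNFAAlt D G A).evalFrom {(D.start, G.v0)} t from rfl,
      relaxAlt_evalFrom]
    exact ⟨(D.start, G.v0), rfl, r, hc, hobs.symm, rfl⟩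

end Aux

/-- The language of the observation-relaxation NFA of `ℳ = 𝒟 × G` under the sensor
alteration `A` is the image of `L(ℳ)` under the altered observation map, which
equals `{O_A(r) : r ∈ L(𝒟) ∩ Walks(G)}`. -/
theorem relaxNFAAlt_accepts {V E Y Q : Type*} [Fintype V] [Fintype E] [Fintype Y]
    (G : WorldGraph V E Y) (D : DFA E Q) (A : Y → Y) :
    (relaxNFAAlt D G A).accepts
        = {t | ∃ r : List E, r ∈ (prodDFA D G).accepts ∧ t = G.obsSeqAlt A r} ∧
      (relaxNFAAlt D G A).accepts
        = {t | ∃ r : List E, r ∈ D.accepts ∧ G.IsWalk r ∧ t = G.obsSeqAlt A r} := by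
  constructor
  · ext t
    change t ∈ (relaxNFAAlt D G A).accepts ↔ ∃ r : List E, r ∈ (prodDFA D G).accepts ∧ t = G.obsSeqAlt A r
    rw [show t ∈ (relaxNFAAlt D G A).accepts ↔ _ from relaxAlt_accepts_iff D G A t]
    constructor
    · rintro ⟨r, ha, hc, hobs⟩
      exact ⟨r, (prod_accepts_iff D G r).2 ⟨ha, hc⟩, hobs⟩
    · rintro ⟨r, hr, hobs⟩
      obtain ⟨ha, hc⟩ := (prod_accepts_iff D G r).1 hr
      exact ⟨r, ha, hc, hobs⟩
  · ext t
    change t ∈ (relaxNFAAlt D G A).accepts ↔ ∃ r : List E, r ∈ D.accepts ∧ G.IsWalk r ∧ t = G.obsSeqAlt A r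
    rw [show t ∈ (relaxNFAAlt D G A).accepts ↔ _ from relaxAlt_accepts_iff D G A t]
    constructor
    · rintro ⟨r, ha, hc, hobs⟩
      exact ⟨r, ha, (isWalk_iff_chainP G r).2 hc, hobs⟩
    · rintro ⟨r, ha, hw, hobs⟩
      exact ⟨r, ha, (isWalk_iff_chainP G r).1 hw, hobs⟩
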